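/- arXiv:2509.21912 — 9 statements merged into one kernel-verified Lean document; each statement's English description precedes it below -/
import Mathlib

section
/- (Posterior-based guidance, joint form.) Under the common-conditional-path setup, for every x ∈ Ω with p_t(x) > 0 and q_t(x) > 0 and every z ∈ Ω, the target posterior is the density-ratio reweighting of the source posterior: q_{1|t}(z|x) = r(z) · p_{1|t}(z|x) / (Σ_{x₁∈Ω} r(x₁) p_{1|t}(x₁|x)). -/
open Finset

/-! The density ratio satisfies `r · p₁ = q₁` pointwise (absolute continuity handles the points
where `p₁` vanishes), so reweighting the source posterior by `r` gives `k(x|·) q₁ / p_t(x)`.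
Summing over `x₁` turns the normaliser into `q_t(x) / p_t(x)`, and the factor `1 / p_t(x)`
cancels in the quotient. -/

theorem mul_eq_of_eq_ite_div {α : Type*} {p q r : α → ℝ}
    (hq : ∀ x, 0 ≤ q x) (hac : ∀ x, 0 < q x → 0 < p x)
    (hr : ∀ x, r x = if 0 < p x then q x / p x else 0) (x : α) :
    r x * p x = q x := by
  rw [hr]
  split_ifs with hpx
  · exact div_mul_cancel₀ _ hpx.ne'
  · have hqx : q x = 0 := le_antisymm (not_lt.mp (mt (hac x) hpx)) (hq x)
    rw [hqx, zero_mul]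

theorem mul_posterior_eq_of_mul_eq {α : Type*} {p q r pt : α → ℝ} {k p1t : α → α → ℝ}
    (hrp : ∀ x, r x * p x = q x)
    (hp1t : ∀ x₁ x, 0 < pt x → p1t x₁ x = k x x₁ * p x₁ / pt x)
    {x : α} (hptx : 0 < pt x) (z : α) :
    r z * p1t z x = k x z * q z / pt x := by
  rw [hp1t z x hptx, ← hrp z]
  ring

theorem posterior_based_guidance_joint_general
    {S : Type*} [Fintype S] {D : ℕ}
    (p₁ q₁ : (Fin D → S) → ℝ)
    (hq₁nonneg : ∀ x, 0 ≤ q₁ x)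
    (hac : ∀ x, 0 < q₁ x → 0 < p₁ x)
    (r : (Fin D → S) → ℝ)
    (hr : ∀ x, r x = if 0 < p₁ x then q₁ x / p₁ x else 0)
    (k : (Fin D → S) → (Fin D → S) → ℝ)
    (pt qt : (Fin D → S) → ℝ)
    (hqt : ∀ x, qt x = ∑ x₁, k x x₁ * q₁ x₁)
    (p1t q1t : (Fin D → S) → (Fin D → S) → ℝ)
    (hp1t : ∀ x₁ x, 0 < pt x → p1t x₁ x = k x x₁ * p₁ x₁ / pt x)
    (hq1t : ∀ x₁ x, 0 < qt x → q1t x₁ x = k x x₁ * q₁ x₁ / qt x)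
    (x : Fin D → S) (hptpos : 0 < pt x) (hqtpos : 0 < qt x)
    (z : Fin D → S) :
    q1t z x = r z * p1t z x / (∑ x₁, r x₁ * p1t x₁ x) := by
  have hreweight :=
    mul_posterior_eq_of_mul_eq (mul_eq_of_eq_ite_div hq₁nonneg hac hr) hp1t hptpos
  have hnormaliser : ∑ x₁, r x₁ * p1t x₁ x = qt x / pt x := by
    simp only [hreweight, ← sum_div, hqt]
  rw [hq1t z x hqtpos, hreweight, hnormaliser, div_div_div_cancel_right₀ hptpos.ne']

/-- Posterior-based guidance, joint form: for every `x` with `p_t x > 0` and `q_t x > 0`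
and every `z`, `q_{1|t}(z|x) = r z · p_{1|t}(z|x) / (Σ_{x₁} r x₁ p_{1|t}(x₁|x))`. -/
theorem posterior_based_guidance_joint
    {S : Type*} [Fintype S] [Nonempty S] {D : ℕ} (hD : 0 < D)
    (p₁ q₁ : (Fin D → S) → ℝ)
    (hp₁nonneg : ∀ x, 0 ≤ p₁ x) (hp₁sum : ∑ x, p₁ x = 1)
    (hq₁nonneg : ∀ x, 0 ≤ q₁ x) (hq₁sum : ∑ x, q₁ x = 1)
    (hac : ∀ x, 0 < q₁ x → 0 < p₁ x)
    (r : (Fin D → S) → ℝ)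
    (hr : ∀ x, r x = if 0 < p₁ x then q₁ x / p₁ x else 0)
    (k : (Fin D → S) → (Fin D → S) → ℝ)
    (hknonneg : ∀ x x₁, 0 ≤ k x x₁) (hksum : ∀ x₁, ∑ x, k x x₁ = 1)
    (pt qt : (Fin D → S) → ℝ)
    (hpt : ∀ x, pt x = ∑ x₁, k x x₁ * p₁ x₁)
    (hqt : ∀ x, qt x = ∑ x₁, k x x₁ * q₁ x₁)
    (p1t q1t : (Fin D → S) → (Fin D → S) → ℝ)
    (hp1t : ∀ x₁ x, 0 < pt x → p1t x₁ x = k x x₁ * p₁ x₁ / pt x)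
    (hq1t : ∀ x₁ x, 0 < qt x → q1t x₁ x = k x x₁ * q₁ x₁ / qt x)
    (x : Fin D → S) (hptpos : 0 < pt x) (hqtpos : 0 < qt x)
    (z : Fin D → S) :
    q1t z x = r z * p1t z x / (∑ x₁, r x₁ * p1t x₁ x) :=
  posterior_based_guidance_joint_general p₁ q₁ hq₁nonneg hac r hr k pt qt hqt p1t q1t hp1t hq1t x
    hptpos hqtpos z
end

section
/- (Theorem 1, posterior-based guidance, coordinate form.) Under the common-conditional-path setup, for every x ∈ Ω with p_t(x) > 0 and q_t(x) > 0, every coordinate d ∈ Fin D and every symbol s ∈ S, the coordinate-marginal target posterior satisfies q^d_{1|t}(s|x) · (Σ_{x₁∈Ω} r(x₁) p_{1|t}(x₁|x)) = Σ_{x₁ : x₁(d) = s} r(x₁) p_{1|t}(x₁|x); equivalently, q^d_{1|t}(s|x) equals the conditional expectation of r(x₁) given x₁(d) = s and x_t = x, divided by the conditional expectation of r(x₁) given x_t = x, times p^d_{1|t}(s|x). -/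
/-!
Multiplying the source posterior by the density ratio `r = q₁ / p₁` turns Bayes' numerator
`k(x|x₁) p₁(x₁)` into `k(x|x₁) q₁(x₁)`; absolute continuity makes this hold also where `p₁`
vanishes, since there `r = 0` and `q₁ = 0`. Hence `∑_{x₁ ∈ A} r(x₁) p_{1|t}(x₁|x)` equals
`(∑_{x₁ ∈ A} k(x|x₁) q₁(x₁)) / p_t(x)` for every set `A`: over all of `Ω` this is
`q_t(x) / p_t(x)`, and over the fibre `{x₁ d = s}` it is `q^d_{1|t}(s|x) · q_t(x) / p_t(x)`.
-/

open Finset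

section DensityRatio

variable {α : Type*}

noncomputable def densityRatio (p q : α → ℝ) (x : α) : ℝ :=
  if 0 < p x then q x / p x else 0

lemma densityRatio_mul_self {p q : α → ℝ} (hq : ∀ x, 0 ≤ q x)
    (hac : ∀ x, 0 < q x → 0 < p x) (x : α) :
    densityRatio p q x * p x = q x := by
  unfold densityRatio
  split_ifs with hp
  · exact div_mul_cancel₀ _ hp.ne'
  · have hq0 : q x = 0 := le_antisymm (not_lt.mp (mt (hac x) hp)) (hq x)
    rw [zero_mul, hq0]

lemma densityRatio_mul_posterior {p q : α → ℝ} (hq : ∀ x, 0 ≤ q x)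
    (hac : ∀ x, 0 < q x → 0 < p x) (w : α → ℝ) (c : ℝ) (x : α) :
    densityRatio p q x * (w x * p x / c) = w x * q x / c := by
  rw [← densityRatio_mul_self hq hac x]
  ring

lemma sum_densityRatio_mul_posterior {p q : α → ℝ} (hq : ∀ x, 0 ≤ q x)
    (hac : ∀ x, 0 < q x → 0 < p x) (w : α → ℝ) (c : ℝ) (A : Finset α) :
    ∑ x ∈ A, densityRatio p q x * (w x * p x / c) = (∑ x ∈ A, w x * q x) / c := by
  rw [sum_div]
  exact sum_congr rfl fun x _ => densityRatio_mul_posterior hq hac w c x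

end DensityRatio

theorem posterior_based_guidance_coordinate_general
    {S : Type*} [Fintype S] [DecidableEq S] {D : ℕ}
    (p₁ q₁ : (Fin D → S) → ℝ)
    (hq₁nonneg : ∀ x, 0 ≤ q₁ x)
    (hac : ∀ x, 0 < q₁ x → 0 < p₁ x)
    (r : (Fin D → S) → ℝ)
    (hr : ∀ x, r x = if 0 < p₁ x then q₁ x / p₁ x else 0)
    (k : (Fin D → S) → (Fin D → S) → ℝ)
    (pt qt : (Fin D → S) → ℝ)
    (hqt : ∀ x, qt x = ∑ x₁, k x x₁ * q₁ x₁)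
    (p1t q1t : (Fin D → S) → (Fin D → S) → ℝ)
    (hp1t : ∀ x₁ x, 0 < pt x → p1t x₁ x = k x x₁ * p₁ x₁ / pt x)
    (hq1t : ∀ x₁ x, 0 < qt x → q1t x₁ x = k x x₁ * q₁ x₁ / qt x)
    (qd : Fin D → S → (Fin D → S) → ℝ)
    (hqd : ∀ d s x, qd d s x = ∑ x₁ ∈ Finset.univ.filter (fun x₁ => x₁ d = s), q1t x₁ x)
    (x : Fin D → S) (hptpos : 0 < pt x) (hqtpos : 0 < qt x)
    (d : Fin D) (s : S) :
    qd d s x * (∑ x₁, r x₁ * p1t x₁ x) =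
      ∑ x₁ ∈ Finset.univ.filter (fun x₁ => x₁ d = s), r x₁ * p1t x₁ x := by
  obtain rfl : r = densityRatio p₁ q₁ := funext hr
  have hreweight (A : Finset (Fin D → S)) :
      ∑ x₁ ∈ A, densityRatio p₁ q₁ x₁ * p1t x₁ x = (∑ x₁ ∈ A, k x x₁ * q₁ x₁) / pt x := by
    simp only [fun x₁ => hp1t x₁ x hptpos]
    exact sum_densityRatio_mul_posterior hq₁nonneg hac (k x) (pt x) A
  have hmarginal : qd d s x = (∑ x₁ ∈ univ.filter (fun x₁ => x₁ d = s), k x x₁ * q₁ x₁) / qt x := by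
    rw [hqd, sum_div]
    exact sum_congr rfl fun x₁ _ => hq1t x₁ x hqtpos
  rw [hmarginal, hreweight, hreweight, ← hqt]
  field_simp

/-- Theorem 1 (posterior-based guidance, coordinate form): for every `x` with
`p_t x > 0` and `q_t x > 0`, every coordinate `d` and symbol `s`,
`q^d_{1|t}(s|x) · (Σ_{x₁} r x₁ p_{1|t}(x₁|x)) = Σ_{x₁ : x₁ d = s} r x₁ p_{1|t}(x₁|x)`. -/
theorem posterior_based_guidance_coordinate
    {S : Type*} [Fintype S] [Nonempty S] [DecidableEq S] {D : ℕ} (hD : 0 < D)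
    (p₁ q₁ : (Fin D → S) → ℝ)
    (hp₁nonneg : ∀ x, 0 ≤ p₁ x) (hp₁sum : ∑ x, p₁ x = 1)
    (hq₁nonneg : ∀ x, 0 ≤ q₁ x) (hq₁sum : ∑ x, q₁ x = 1)
    (hac : ∀ x, 0 < q₁ x → 0 < p₁ x)
    (r : (Fin D → S) → ℝ)
    (hr : ∀ x, r x = if 0 < p₁ x then q₁ x / p₁ x else 0)
    (k : (Fin D → S) → (Fin D → S) → ℝ)
    (hknonneg : ∀ x x₁, 0 ≤ k x x₁) (hksum : ∀ x₁, ∑ x, k x x₁ = 1)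
    (pt qt : (Fin D → S) → ℝ)
    (hpt : ∀ x, pt x = ∑ x₁, k x x₁ * p₁ x₁)
    (hqt : ∀ x, qt x = ∑ x₁, k x x₁ * q₁ x₁)
    (p1t q1t : (Fin D → S) → (Fin D → S) → ℝ)
    (hp1t : ∀ x₁ x, 0 < pt x → p1t x₁ x = k x x₁ * p₁ x₁ / pt x)
    (hq1t : ∀ x₁ x, 0 < qt x → q1t x₁ x = k x x₁ * q₁ x₁ / qt x)
    (pd qd : Fin D → S → (Fin D → S) → ℝ)
    (hpd : ∀ d s x, pd d s x = ∑ x₁ ∈ Finset.univ.filter (fun x₁ => x₁ d = s), p1t x₁ x)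
    (hqd : ∀ d s x, qd d s x = ∑ x₁ ∈ Finset.univ.filter (fun x₁ => x₁ d = s), q1t x₁ x)
    (x : Fin D → S) (hptpos : 0 < pt x) (hqtpos : 0 < qt x)
    (d : Fin D) (s : S) :
    qd d s x * (∑ x₁, r x₁ * p1t x₁ x) =
      ∑ x₁ ∈ Finset.univ.filter (fun x₁ => x₁ d = s), r x₁ * p1t x₁ x :=
  posterior_based_guidance_coordinate_general p₁ q₁ hq₁nonneg hac r hr k pt qt hqt p1t q1t hp1t hq1t
    qd hqd x hptpos hqtpos d s
end

section
/- (Coordinatewise marginalization of a factorized conditional rate.) Suppose the conditional transition rate factorizes as u(z, x | x₁) = Σ_{d∈Fin D} [x^{∖d} = z^{∖d}] · u^d(z(d), x(d) | x₁(d)), where [x^{∖d} = z^{∖d}] is 1 if x and z agree on all coordinates other than d and 0 otherwise, and u^d : S × S × S → ℝ. Then for every x with q_t(x) > 0 and every z, the marginal rate satisfies Σ_{x₁∈Ω} u(z, x | x₁) q_{1|t}(x₁|x) = Σ_{d∈Fin D} [x^{∖d} = z^{∖d}] · Σ_{s∈S} u^d(z(d), x(d) | s) q^d_{1|t}(s|x);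 i.e. the marginal rate depends on x₁ only through the coordinate-marginal posteriors. -/
open Finset

/-! Exchange the sums over `x₁` and `d`. For fixed `d` the `d`-th summand depends on `x₁` only
through `x₁ d`, so summing it over the fibres of `x₁ ↦ x₁ d` turns the posterior into its
`d`-th coordinate marginal. -/

theorem Finset.sum_comp_mul_eq_sum_mul_sum_fiber {ι κ R : Type*} [Fintype κ] [DecidableEq κ]
    [NonUnitalNonAssocSemiring R] (s : Finset ι) (g : ι → κ) (f : κ → R) (w : ι → R) :
    ∑ i ∈ s, f (g i) * w i = ∑ j, f j * ∑ i ∈ s with g i = j, w i := by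
  rw [← sum_fiberwise s g]
  refine sum_congr rfl fun j _ => ?_
  rw [mul_sum]
  exact sum_congr rfl fun i hi => by rw [(mem_filter.mp hi).2]

theorem coordinatewise_marginalization_of_factorized_rate_general
    {S : Type*} [Fintype S] [DecidableEq S] {D : ℕ}
    (q1t : (Fin D → S) → (Fin D → S) → ℝ)
    (qd : Fin D → S → (Fin D → S) → ℝ)
    (hqd : ∀ d s x, qd d s x = ∑ x₁ ∈ Finset.univ.filter (fun x₁ => x₁ d = s), q1t x₁ x)
    (ud : Fin D → S → S → S → ℝ)
    (u : (Fin D → S) → (Fin D → S) → (Fin D → S) → ℝ)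
    (hu : ∀ z x x₁, u z x x₁ =
      ∑ d, (if ∀ e, e ≠ d → x e = z e then (1 : ℝ) else 0) * ud d (z d) (x d) (x₁ d))
    (x : Fin D → S) (z : Fin D → S) :
    ∑ x₁, u z x x₁ * q1t x₁ x =
      ∑ d, (if ∀ e, e ≠ d → x e = z e then (1 : ℝ) else 0) *
        ∑ s, ud d (z d) (x d) s * qd d s x := by
  simp only [hu, sum_mul]
  rw [sum_comm]
  refine sum_congr rfl fun d _ => ?_
  simp only [mul_assoc, ← mul_sum, hqd]
  congr 1
  exact sum_comp_mul_eq_sum_mul_sum_fiber univ (fun x₁ => x₁ d) (ud d (z d) (x d)) (q1t · x)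

/-- Coordinatewise marginalization of a factorized conditional rate: if
`u(z,x|x₁) = Σ_d [x^{∖d} = z^{∖d}] u^d(z d, x d | x₁ d)`, then the posterior-averaged
rate depends on `x₁` only through the coordinate-marginal posteriors. -/
theorem coordinatewise_marginalization_of_factorized_rate
    {S : Type*} [Fintype S] [Nonempty S] [DecidableEq S] {D : ℕ} (hD : 0 < D)
    (q₁ : (Fin D → S) → ℝ)
    (hq₁nonneg : ∀ x, 0 ≤ q₁ x) (hq₁sum : ∑ x, q₁ x = 1)
    (k : (Fin D → S) → (Fin D → S) → ℝ)
    (hknonneg : ∀ x x₁, 0 ≤ k x x₁) (hksum : ∀ x₁, ∑ x, k x x₁ = 1)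
    (qt : (Fin D → S) → ℝ)
    (hqt : ∀ x, qt x = ∑ x₁, k x x₁ * q₁ x₁)
    (q1t : (Fin D → S) → (Fin D → S) → ℝ)
    (hq1t : ∀ x₁ x, 0 < qt x → q1t x₁ x = k x x₁ * q₁ x₁ / qt x)
    (qd : Fin D → S → (Fin D → S) → ℝ)
    (hqd : ∀ d s x, qd d s x = ∑ x₁ ∈ Finset.univ.filter (fun x₁ => x₁ d = s), q1t x₁ x)
    (ud : Fin D → S → S → S → ℝ)
    (u : (Fin D → S) → (Fin D → S) → (Fin D → S) → ℝ)
    (hu : ∀ z x x₁, u z x x₁ =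
      ∑ d, (if ∀ e, e ≠ d → x e = z e then (1 : ℝ) else 0) * ud d (z d) (x d) (x₁ d))
    (x : Fin D → S) (hqtpos : 0 < qt x) (z : Fin D → S) :
    ∑ x₁, u z x x₁ * q1t x₁ x =
      ∑ d, (if ∀ e, e ≠ d → x e = z e then (1 : ℝ) else 0) *
        ∑ s, ud d (z d) (x d) s * qd d s x :=
  coordinatewise_marginalization_of_factorized_rate_general q1t qd hqd ud u hu x z
end

section
/- (Theorem 2, rate-based guidance, limit form.) Let Ω be a nonempty finite set and fix two distinct states z ≠ x. Let p_t, q_t be pmfs on Ω with p_t(x), p_t(z), q_t(x), q_t(z) > 0, and for each h in an interval (0, h₀) let p_{t+h}, q_{t+h} be pmfs and P_h, Q_h forward transition kernels with p_{t+h}(w) = Σ_v P_h(w|v) p_t(v) and q_{t+h}(w) = Σ_v Q_h(w|v) q_t(v) for all w. Assume: (i) equal backward conditionals: P_h(w|v) p_t(v)/p_{t+h}(w) = Q_h(w|v) q_t(v)/q_{t+h}(w) whenever p_{t+h}(w) > 0 and q_{t+h}(w) > 0; (ii) continuity: p_{t+h}(w) → p_t(w) and q_{t+h}(w) → q_t(w)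 as h → 0⁺, for w ∈ {x, z}; (iii) the limit u^p(z, x) := lim_{h→0⁺} P_h(z|x)/h exists. Then lim_{h→0⁺} Q_h(z|x)/h exists and equals (q_t(z) p_t(x) / (p_t(z) q_t(x))) · u^p(z, x). -/
/-! Reading the equal backward conditionals at `(v, w) = (x, z)` gives
`Q_h(z|x) = P_h(z|x) · p_t(x) q_{t+h}(z) / (q_t(x) p_{t+h}(z))` as soon as both marginals at `z`
are positive, which holds for small `h` by continuity. Dividing by `h` and letting `h → 0⁺`, the
marginal ratio tends to `p_t(x) q_t(z) / (q_t(x) p_t(z))`. -/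

open Filter Topology

lemma forward_eq_mul_of_backward_eq {P Q p q p' q' : ℝ} (hq : q ≠ 0) (hp' : p' ≠ 0)
    (hq' : q' ≠ 0) (h : P * p / p' = Q * q / q') :
    Q = P * (p * q' / (q * p')) := by
  field_simp at h ⊢
  linarith

lemma tendsto_div_of_eventually_eq_mul {α : Type*} {l : Filter α} {f g c r : α → ℝ}
    {u c₀ : ℝ} (hf : Tendsto (fun a => f a / r a) l (𝓝 u)) (hc : Tendsto c l (𝓝 c₀))
    (hfg : ∀ᶠ a in l, g a = f a * c a) :
    Tendsto (fun a => g a / r a) l (𝓝 (c₀ * u)) := by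
  rw [mul_comm]
  refine (hf.mul hc).congr' ?_
  filter_upwards [hfg] with a ha
  rw [ha, mul_div_right_comm]

theorem rate_based_guidance_limit_general
    {Ω : Type*}
    (x z : Ω)
    (pt qt : Ω → ℝ)
    (hptz : 0 < pt z) (hqtx : 0 < qt x) (hqtz : 0 < qt z)
    (h₀ : ℝ) (hh₀ : 0 < h₀)
    (pth qth : ℝ → Ω → ℝ) (Ph Qh : ℝ → Ω → Ω → ℝ)
    (hback : ∀ h ∈ Set.Ioo (0 : ℝ) h₀, ∀ v w, 0 < pth h w → 0 < qth h w →
      Ph h w v * pt v / pth h w = Qh h w v * qt v / qth h w)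
    (hpcont : ∀ w ∈ ({x, z} : Set Ω),
      Tendsto (fun h => pth h w) (𝓝[>] (0 : ℝ)) (𝓝 (pt w)))
    (hqcont : ∀ w ∈ ({x, z} : Set Ω),
      Tendsto (fun h => qth h w) (𝓝[>] (0 : ℝ)) (𝓝 (qt w)))
    (up : ℝ)
    (hlim : Tendsto (fun h => Ph h z x / h) (𝓝[>] (0 : ℝ)) (𝓝 up)) :
    Tendsto (fun h => Qh h z x / h) (𝓝[>] (0 : ℝ))
      (𝓝 (qt z * pt x / (pt z * qt x) * up)) := by
  have hpz := hpcont z (by simp)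
  have hqz := hqcont z (by simp)
  have hratio : Tendsto (fun h => pt x * qth h z / (qt x * pth h z)) (𝓝[>] (0 : ℝ))
      (𝓝 (pt x * qt z / (qt x * pt z))) :=
    (tendsto_const_nhds.mul hqz).div (tendsto_const_nhds.mul hpz) (by positivity)
  convert tendsto_div_of_eventually_eq_mul hlim hratio ?_ using 2
  · ring
  filter_upwards [Ioo_mem_nhdsGT hh₀, hpz.eventually (eventually_gt_nhds hptz),
    hqz.eventually (eventually_gt_nhds hqtz)] with h hh hpos hqpos
  exact forward_eq_mul_of_backward_eq hqtx.ne' hpos.ne' hqpos.ne' (hback h hh x z hpos hqpos)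

/-- Theorem 2 (rate-based guidance, limit form): under equal backward conditionals and
continuity of the marginals, if `P_h(z|x)/h → u^p(z,x)` as `h → 0⁺`, then
`Q_h(z|x)/h → (q_t(z) p_t(x) / (p_t(z) q_t(x))) · u^p(z,x)`. -/
theorem rate_based_guidance_limit
    {Ω : Type*} [Fintype Ω] [Nonempty Ω]
    (x z : Ω) (hzx : z ≠ x)
    (pt qt : Ω → ℝ)
    (hptnonneg : ∀ w, 0 ≤ pt w) (hptsum : ∑ w, pt w = 1)
    (hqtnonneg : ∀ w, 0 ≤ qt w) (hqtsum : ∑ w, qt w = 1)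
    (hptx : 0 < pt x) (hptz : 0 < pt z) (hqtx : 0 < qt x) (hqtz : 0 < qt z)
    (h₀ : ℝ) (hh₀ : 0 < h₀)
    (pth qth : ℝ → Ω → ℝ) (Ph Qh : ℝ → Ω → Ω → ℝ)
    (hpthpmf : ∀ h ∈ Set.Ioo (0 : ℝ) h₀, (∀ w, 0 ≤ pth h w) ∧ ∑ w, pth h w = 1)
    (hqthpmf : ∀ h ∈ Set.Ioo (0 : ℝ) h₀, (∀ w, 0 ≤ qth h w) ∧ ∑ w, qth h w = 1)
    (hPker : ∀ h ∈ Set.Ioo (0 : ℝ) h₀, (∀ w v, 0 ≤ Ph h w v) ∧ ∀ v, ∑ w, Ph h w v = 1)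
    (hQker : ∀ h ∈ Set.Ioo (0 : ℝ) h₀, (∀ w v, 0 ≤ Qh h w v) ∧ ∀ v, ∑ w, Qh h w v = 1)
    (hpmarg : ∀ h ∈ Set.Ioo (0 : ℝ) h₀, ∀ w, pth h w = ∑ v, Ph h w v * pt v)
    (hqmarg : ∀ h ∈ Set.Ioo (0 : ℝ) h₀, ∀ w, qth h w = ∑ v, Qh h w v * qt v)
    (hback : ∀ h ∈ Set.Ioo (0 : ℝ) h₀, ∀ v w, 0 < pth h w → 0 < qth h w →
      Ph h w v * pt v / pth h w = Qh h w v * qt v / qth h w)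
    (hpcont : ∀ w ∈ ({x, z} : Set Ω),
      Tendsto (fun h => pth h w) (𝓝[>] (0 : ℝ)) (𝓝 (pt w)))
    (hqcont : ∀ w ∈ ({x, z} : Set Ω),
      Tendsto (fun h => qth h w) (𝓝[>] (0 : ℝ)) (𝓝 (qt w)))
    (up : ℝ)
    (hlim : Tendsto (fun h => Ph h z x / h) (𝓝[>] (0 : ℝ)) (𝓝 up)) :
    Tendsto (fun h => Qh h z x / h) (𝓝[>] (0 : ℝ))
      (𝓝 (qt z * pt x / (pt z * qt x) * up)) :=
  rate_based_guidance_limit_general x z pt qt hptz hqtx hqtz h₀ hh₀ pth qth Ph Qh hback hpcont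
    hqcont up hlim
end

section
/- (Marginalization proposition: the posterior-averaged conditional rate generates the marginal path.) Let Ω and A be nonempty finite sets, let p₁ be a pmf on A, and for each x₁ ∈ A let t ↦ p_{t|1}(·|x₁) be a family of pmfs on Ω, differentiable in t at a point t₀, satisfying the conditional Kolmogorov forward equation d/dt p_{t|1}(x|x₁) = Σ_{z∈Ω} u_t(x, z | x₁) p_{t|1}(z|x₁) at t₀, where u_{t₀}(·, · | x₁) : Ω × Ω → ℝ. Define the marginal p_t(x) = Σ_{x₁∈A} p₁(x₁) p_{t|1}(x|x₁), assume p_{t₀}(z) > 0 for all z ∈ Ω, define the posterior p_{1|t₀}(x₁|z) = p₁(x₁) p_{t₀|1}(z|x₁)/p_{t₀}(z) and the marginal rate u_{t₀}(x, z) = Σ_{x₁∈A} u_{t₀}(x, z | x₁) p_{1|t₀}(x₁|z). Then the marginal path satisfies the Kolmogorov forward equation at t₀: d/dt p_t(x)|_{t=t₀} = Σ_{z∈Ω} u_{t₀}(x, z) p_{t₀}(z), for every x ∈ Ω. -/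
open Finset

/-! The marginal is a `p₁`-mixture of the conditional paths, so its derivative is the mixture of
the conditional fluxes `∑ z, u(x, z | x₁) p_{t|1}(z | x₁)`. Multiplying the posterior by
`p_t(z)` cancels its denominator, which turns `∑ z, u(x, z) p_t(z)` into that same mixture after
exchanging the sums over `z` and `x₁`. -/

theorem HasDerivAt.sum_const_mul {ι : Type*} (s : Finset ι) (c : ι → ℝ) {f : ι → ℝ → ℝ}
    {f' : ι → ℝ} {t : ℝ} (hf : ∀ i ∈ s, HasDerivAt (f i) (f' i) t) :
    HasDerivAt (fun t => ∑ i ∈ s, c i * f i t) (∑ i ∈ s, c i * f' i) t :=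
  HasDerivAt.fun_sum fun i hi => (hf i hi).const_mul (c i)

theorem sum_mul_posterior_mul_evidence {ι : Type*} (s : Finset ι) (r w q : ι → ℝ) {P : ℝ}
    (hP : P ≠ 0) :
    (∑ i ∈ s, r i * (w i * q i / P)) * P = ∑ i ∈ s, w i * (r i * q i) := by
  rw [sum_mul]
  refine sum_congr rfl fun i _ => ?_
  field_simp

theorem marginal_rate_generates_marginal_path_general
    {Ω : Type*} [Fintype Ω]
    {A : Type*} [Fintype A]
    (p₁ : A → ℝ)
    (pt1 : ℝ → A → Ω → ℝ)
    (t₀ : ℝ)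
    (u : Ω → Ω → A → ℝ)
    (hKFEcond : ∀ x₁ x,
      HasDerivAt (fun t => pt1 t x₁ x) (∑ z, u x z x₁ * pt1 t₀ x₁ z) t₀)
    (Pt : ℝ → Ω → ℝ)
    (hPt : ∀ t x, Pt t x = ∑ x₁, p₁ x₁ * pt1 t x₁ x)
    (hpos : ∀ z, 0 < Pt t₀ z)
    (p1t : A → Ω → ℝ)
    (hp1t : ∀ x₁ z, p1t x₁ z = p₁ x₁ * pt1 t₀ x₁ z / Pt t₀ z)
    (U : Ω → Ω → ℝ)
    (hU : ∀ x z, U x z = ∑ x₁, u x z x₁ * p1t x₁ z) :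
    ∀ x, HasDerivAt (fun t => Pt t x) (∑ z, U x z * Pt t₀ z) t₀ := by
  intro x
  have hflux : ∑ z, U x z * Pt t₀ z = ∑ x₁, p₁ x₁ * ∑ z, u x z x₁ * pt1 t₀ x₁ z := calc
    ∑ z, U x z * Pt t₀ z = ∑ z, ∑ x₁, p₁ x₁ * (u x z x₁ * pt1 t₀ x₁ z) :=
      sum_congr rfl fun z _ => by
        simp only [hU, hp1t]
        exact sum_mul_posterior_mul_evidence _ _ _ _ (hpos z).ne'
    _ = ∑ x₁, p₁ x₁ * ∑ z, u x z x₁ * pt1 t₀ x₁ z := by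
      simp only [sum_comm (γ := Ω), mul_sum]
  rw [hflux, show (fun t => Pt t x) = fun t => ∑ x₁, p₁ x₁ * pt1 t x₁ x from funext (hPt · x)]
  exact HasDerivAt.sum_const_mul _ p₁ fun x₁ _ => hKFEcond x₁ x

/-- Marginalization proposition: the posterior-averaged conditional rate generates the
marginal probability path (Kolmogorov forward equation for the marginal path). -/
theorem marginal_rate_generates_marginal_path
    {Ω : Type*} [Fintype Ω] [Nonempty Ω]
    {A : Type*} [Fintype A] [Nonempty A]
    (p₁ : A → ℝ) (hp₁nonneg : ∀ x₁, 0 ≤ p₁ x₁) (hp₁sum : ∑ x₁, p₁ x₁ = 1)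
    (pt1 : ℝ → A → Ω → ℝ)
    (hpt1nonneg : ∀ t x₁ x, 0 ≤ pt1 t x₁ x)
    (hpt1sum : ∀ t x₁, ∑ x, pt1 t x₁ x = 1)
    (t₀ : ℝ)
    (u : Ω → Ω → A → ℝ)
    (hKFEcond : ∀ x₁ x,
      HasDerivAt (fun t => pt1 t x₁ x) (∑ z, u x z x₁ * pt1 t₀ x₁ z) t₀)
    (Pt : ℝ → Ω → ℝ)
    (hPt : ∀ t x, Pt t x = ∑ x₁, p₁ x₁ * pt1 t x₁ x)
    (hpos : ∀ z, 0 < Pt t₀ z)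
    (p1t : A → Ω → ℝ)
    (hp1t : ∀ x₁ z, p1t x₁ z = p₁ x₁ * pt1 t₀ x₁ z / Pt t₀ z)
    (U : Ω → Ω → ℝ)
    (hU : ∀ x z, U x z = ∑ x₁, u x z x₁ * p1t x₁ z) :
    ∀ x, HasDerivAt (fun t => Pt t x) (∑ z, U x z * Pt t₀ z) t₀ :=
  marginal_rate_generates_marginal_path_general p₁ pt1 t₀ u hKFEcond Pt hPt hpos p1t hp1t U hU
end

section
/- (Concrete-score form of the rate-based guidance ratio.) Under the common-conditional-path setup, suppose x, z ∈ Ω satisfy p_t(x) > 0, p_t(z) > 0, q_t(x) > 0, q_t(z) > 0, and k(x|x₁) > 0 for every x₁ in the support of p₁. Then (Σ_{x₁} (k(z|x₁)/k(x|x₁)) q_{1|t}(x₁|x)) / (Σ_{x₁} (k(z|x₁)/k(x|x₁)) p_{1|t}(x₁|x)) = (Σ_{x₁} r(x₁) p_{1|t}(x₁|z)) / (Σ_{x₁} r(x₁) p_{1|t}(x₁|x)). -/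
/-!
Bayes' rule turns each posterior-weighted sum into a ratio of marginals:
`∑ (k z/k x) q_{1|t}(·|x) = q_t(z)/q_t(x)`, `∑ (k z/k x) p_{1|t}(·|x) = p_t(z)/p_t(x)` and
`∑ r p_{1|t}(·|w) = q_t(w)/p_t(w)`, because `k(x|·)` cancels and `r p₁ = q₁`.
Both sides of the identity are then `q_t(z) p_t(x) / (q_t(x) p_t(z))`.
-/

open Finset

section Posterior

variable {ι : Type*} [Fintype ι]

theorem sum_kernel_ratio_mul_posterior {k : ι → ι → ℝ} {μ post : ι → ℝ} {x : ι} {c : ℝ}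
    (hpost : ∀ i, post i = k x i * μ i / c) (hμ : ∀ i, k x i = 0 → μ i = 0) (z : ι) :
    ∑ i, k z i / k x i * post i = (∑ i, k z i * μ i) / c := by
  rw [sum_div]
  refine sum_congr rfl fun i _ => ?_
  rw [hpost]
  by_cases hk : k x i = 0
  · simp [hμ i hk]
  · field_simp

theorem sum_mul_posterior_of_mul_eq {k : ι → ι → ℝ} {r μ ν post : ι → ℝ} {w : ι} {c : ℝ}
    (hpost : ∀ i, post i = k w i * μ i / c) (hr : ∀ i, r i * μ i = ν i) :
    ∑ i, r i * post i = (∑ i, k w i * ν i) / c := by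
  rw [sum_div]
  refine sum_congr rfl fun i _ => ?_
  rw [hpost, ← hr]
  ring

end Posterior

theorem densityRatio_mul_self_s10 {α : Type*} {p q r : α → ℝ} (hq : ∀ a, 0 ≤ q a)
    (hac : ∀ a, 0 < q a → 0 < p a) (hr : ∀ a, r a = if 0 < p a then q a / p a else 0) (a : α) : r a * p a = q a := by
  rw [hr]
  split_ifs with hp
  · exact div_mul_cancel₀ _ hp.ne'
  · rw [zero_mul, (hq a).eq_of_not_lt (mt (hac a) hp)]

theorem concrete_score_guidance_ratio_general
    {S : Type*} [Fintype S] {D : ℕ}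
    (p₁ q₁ : (Fin D → S) → ℝ)
    (hp₁nonneg : ∀ x, 0 ≤ p₁ x)
    (hq₁nonneg : ∀ x, 0 ≤ q₁ x)
    (hac : ∀ x, 0 < q₁ x → 0 < p₁ x)
    (r : (Fin D → S) → ℝ)
    (hr : ∀ x, r x = if 0 < p₁ x then q₁ x / p₁ x else 0)
    (k : (Fin D → S) → (Fin D → S) → ℝ)
    (pt qt : (Fin D → S) → ℝ)
    (hpt : ∀ x, pt x = ∑ x₁, k x x₁ * p₁ x₁)
    (hqt : ∀ x, qt x = ∑ x₁, k x x₁ * q₁ x₁)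
    (p1t q1t : (Fin D → S) → (Fin D → S) → ℝ)
    (hp1t : ∀ x₁ x, 0 < pt x → p1t x₁ x = k x x₁ * p₁ x₁ / pt x)
    (hq1t : ∀ x₁ x, 0 < qt x → q1t x₁ x = k x x₁ * q₁ x₁ / qt x)
    (x z : Fin D → S)
    (hptx : 0 < pt x) (hptz : 0 < pt z) (hqtx : 0 < qt x)
    (hkpos : ∀ x₁, 0 < p₁ x₁ → 0 < k x x₁) :
    (∑ x₁, (k z x₁ / k x x₁) * q1t x₁ x) / (∑ x₁, (k z x₁ / k x x₁) * p1t x₁ x) =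
      (∑ x₁, r x₁ * p1t x₁ z) / (∑ x₁, r x₁ * p1t x₁ x) := by
  have hp₁ : ∀ x₁, k x x₁ = 0 → p₁ x₁ = 0 := fun x₁ hk =>
    ((hp₁nonneg x₁).eq_of_not_lt fun hp => (hkpos x₁ hp).ne' hk).symm
  have hq₁ : ∀ x₁, k x x₁ = 0 → q₁ x₁ = 0 := fun x₁ hk =>
    ((hq₁nonneg x₁).eq_of_not_lt fun hq => (hkpos x₁ (hac x₁ hq)).ne' hk).symm
  have hrp := densityRatio_mul_self_s10 hq₁nonneg hac hr
  rw [sum_kernel_ratio_mul_posterior (hq1t · x hqtx) hq₁, ← hqt,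
    sum_kernel_ratio_mul_posterior (hp1t · x hptx) hp₁, ← hpt,
    sum_mul_posterior_of_mul_eq (hp1t · z hptz) hrp, ← hqt,
    sum_mul_posterior_of_mul_eq (hp1t · x hptx) hrp, ← hqt, div_div_div_comm]

/-- Concrete-score form of the rate-based guidance ratio. -/
theorem concrete_score_guidance_ratio
    {S : Type*} [Fintype S] [Nonempty S] {D : ℕ} (hD : 0 < D)
    (p₁ q₁ : (Fin D → S) → ℝ)
    (hp₁nonneg : ∀ x, 0 ≤ p₁ x) (hp₁sum : ∑ x, p₁ x = 1)
    (hq₁nonneg : ∀ x, 0 ≤ q₁ x) (hq₁sum : ∑ x, q₁ x = 1)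
    (hac : ∀ x, 0 < q₁ x → 0 < p₁ x)
    (r : (Fin D → S) → ℝ)
    (hr : ∀ x, r x = if 0 < p₁ x then q₁ x / p₁ x else 0)
    (k : (Fin D → S) → (Fin D → S) → ℝ)
    (hknonneg : ∀ x x₁, 0 ≤ k x x₁) (hksum : ∀ x₁, ∑ x, k x x₁ = 1)
    (pt qt : (Fin D → S) → ℝ)
    (hpt : ∀ x, pt x = ∑ x₁, k x x₁ * p₁ x₁)
    (hqt : ∀ x, qt x = ∑ x₁, k x x₁ * q₁ x₁)
    (p1t q1t : (Fin D → S) → (Fin D → S) → ℝ)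
    (hp1t : ∀ x₁ x, 0 < pt x → p1t x₁ x = k x x₁ * p₁ x₁ / pt x)
    (hq1t : ∀ x₁ x, 0 < qt x → q1t x₁ x = k x x₁ * q₁ x₁ / qt x)
    (x z : Fin D → S)
    (hptx : 0 < pt x) (hptz : 0 < pt z) (hqtx : 0 < qt x) (hqtz : 0 < qt z)
    (hkpos : ∀ x₁, 0 < p₁ x₁ → 0 < k x x₁) :
    (∑ x₁, (k z x₁ / k x x₁) * q1t x₁ x) / (∑ x₁, (k z x₁ / k x x₁) * p1t x₁ x) =
      (∑ x₁, r x₁ * p1t x₁ z) / (∑ x₁, r x₁ * p1t x₁ x) :=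
  concrete_score_guidance_ratio_general p₁ q₁ hp₁nonneg hq₁nonneg hac r hr k pt qt hpt hqt p1t q1t
    hp1t hq1t x z hptx hptz hqtx hkpos
end

section
/- (Equivalence proposition for x₁-independent time reversal.) Under the common-conditional-path setup, fix two states x ≠ z with p_t(x) > 0 and k(z|x₁) > 0 for all x₁ in the support of p₁, and let u : Ω → ℝ (x₁ ↦ u(z, x | x₁)) be a conditional rate such that the quantity u(z, x | x₁) · k(x|x₁)/k(z|x₁) takes a common value Q(x, z) for every x₁ in the support of p₁. Then the posterior-averaged rate satisfies Σ_{x₁∈Ω} u(z, x | x₁) p_{1|t}(x₁|x) = Q(x, z) · p_t(z)/p_t(x). -/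
open Finset

section ConstantRatio

variable {ι 𝕜 : Type*} [Field 𝕜] [PartialOrder 𝕜]

theorem mul_mul_weight_eq_of_div_eq {w a b u : ι → 𝕜} {Q : 𝕜} (hw : ∀ i, 0 ≤ w i)
    (hb : ∀ i, 0 < w i → 0 < b i) (hQ : ∀ i, 0 < w i → u i * a i / b i = Q) (i : ι) :
    u i * (a i * w i) = Q * (b i * w i) := by
  rcases (hw i).eq_or_lt with hzero | hpos
  · simp [← hzero]
  · have hbi : b i ≠ 0 := (hb i hpos).ne'
    rw [← hQ i hpos]
    field_simp

theorem sum_mul_mul_weight_eq_of_div_eq [Fintype ι] {w a b u : ι → 𝕜} {Q : 𝕜}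
    (hw : ∀ i, 0 ≤ w i) (hb : ∀ i, 0 < w i → 0 < b i)
    (hQ : ∀ i, 0 < w i → u i * a i / b i = Q) :
    ∑ i, u i * (a i * w i) = Q * ∑ i, b i * w i := by
  rw [mul_sum]
  exact sum_congr rfl fun i _ => mul_mul_weight_eq_of_div_eq hw hb hQ i

end ConstantRatio

theorem x1_independent_time_reversal_equivalence_general
    {S : Type*} [Fintype S] {D : ℕ}
    (p₁ : (Fin D → S) → ℝ)
    (hp₁nonneg : ∀ x, 0 ≤ p₁ x)
    (k : (Fin D → S) → (Fin D → S) → ℝ)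
    (pt : (Fin D → S) → ℝ)
    (hpt : ∀ x, pt x = ∑ x₁, k x x₁ * p₁ x₁)
    (x z : Fin D → S)
    (hkz : ∀ x₁, 0 < p₁ x₁ → 0 < k z x₁)
    (u : (Fin D → S) → ℝ) (Qxz : ℝ)
    (hcommon : ∀ x₁, 0 < p₁ x₁ → u x₁ * k x x₁ / k z x₁ = Qxz) :
    ∑ x₁, u x₁ * (k x x₁ * p₁ x₁ / pt x) = Qxz * pt z / pt x := by
  calc ∑ x₁, u x₁ * (k x x₁ * p₁ x₁ / pt x)
      = (∑ x₁, u x₁ * (k x x₁ * p₁ x₁)) / pt x := by simp only [mul_div_assoc', sum_div]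
    _ = Qxz * pt z / pt x := by
      rw [sum_mul_mul_weight_eq_of_div_eq hp₁nonneg hkz hcommon, hpt z]

/-- Equivalence proposition for `x₁`-independent time reversal: if
`u(z,x|x₁) · k(x|x₁)/k(z|x₁)` takes a common value `Q(x,z)` on the support of `p₁`,
then `Σ_{x₁} u(z,x|x₁) p_{1|t}(x₁|x) = Q(x,z) · p_t(z)/p_t(x)`. -/
theorem x1_independent_time_reversal_equivalence
    {S : Type*} [Fintype S] [Nonempty S] {D : ℕ} (hD : 0 < D)
    (p₁ : (Fin D → S) → ℝ)
    (hp₁nonneg : ∀ x, 0 ≤ p₁ x) (hp₁sum : ∑ x, p₁ x = 1)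
    (k : (Fin D → S) → (Fin D → S) → ℝ)
    (hknonneg : ∀ x x₁, 0 ≤ k x x₁) (hksum : ∀ x₁, ∑ x, k x x₁ = 1)
    (pt : (Fin D → S) → ℝ)
    (hpt : ∀ x, pt x = ∑ x₁, k x x₁ * p₁ x₁)
    (x z : Fin D → S) (hxz : x ≠ z)
    (hptpos : 0 < pt x)
    (hkz : ∀ x₁, 0 < p₁ x₁ → 0 < k z x₁)
    (u : (Fin D → S) → ℝ) (Qxz : ℝ)
    (hcommon : ∀ x₁, 0 < p₁ x₁ → u x₁ * k x x₁ / k z x₁ = Qxz) :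
    ∑ x₁, u x₁ * (k x x₁ * p₁ x₁ / pt x) = Qxz * pt z / pt x :=
  x1_independent_time_reversal_equivalence_general p₁ hp₁nonneg k pt hpt x z hkz u Qxz hcommon
end

section
/- (The exact guidance minimizes the regularization objective.) Under the common-conditional-path setup with coordinate-marginal posteriors, define for x with p_t(x) > 0 the exact guidance h*(d, s, x) = (Σ_{x₁ : x₁(d) = s} r(x₁) p_{1|t}(x₁|x)) / p^d_{1|t}(s|x) whenever p^d_{1|t}(s|x) > 0 (and h*(d, s, x) = 1 otherwise). Then for every H : Fin D × S × Ω → ℝ with H(d, s, x) > 0 everywhere, the objective L(H) = Σ_{x₁∈Ω} Σ_{x∈Ω} q₁(x₁) k(x|x₁) · Σ_{d∈Fin D} (− log( H(d, x₁(d), x) p^d_{1|t}(x₁(d)|x) / Σ_{s∈S} H(d, s, x) p^d_{1|t}(s|x) )) satisfies L(H) ≥ L(h*); that is, the exact guidance attains the minimum of the cross-entropy regularization objective over positive guidance functions. -/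
/-!
Since `q₁(x₁) k(x|x₁) = p_t(x) r(x₁) p_{1|t}(x₁|x)`, for fixed `x` and `d` the objective is
`p_t(x)` times the cross-entropy `∑ s, W s * -log (H s p^d_s / ∑ H p^d)`, where
`W s = ∑_{x₁ d = s} r(x₁) p_{1|t}(x₁|x)`. The exact guidance satisfies `h* s p^d_s = W s`,
so its normalized weights are `W / ∑ W`, which minimize this cross-entropy by Gibbs' inequality.
-/

open Finset Real

theorem mul_log_div_le_mul_log_div_add {a b A B : ℝ} (ha : 0 ≤ a) (hb : 0 ≤ b)
    (hab : 0 < a → 0 < b) (hA : 0 < A) (hB : 0 < B) :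
    a * log (b / B) ≤ a * log (a / A) + (A / B * b - a) := by
  rcases ha.eq_or_lt with rfl | ha
  · simpa using mul_nonneg (div_nonneg hA.le hB.le) hb
  have hb := hab ha
  have hlog : log (b / B) - log (a / A) ≤ A / B * b / a - 1 := by
    rw [← log_div (by positivity) (by positivity)]
    convert log_le_sub_one_of_pos (by positivity : 0 < b / B / (a / A)) using 2
    field_simp
  have := mul_le_mul_of_nonneg_left hlog ha.le
  rw [mul_sub, mul_sub, mul_div_cancel₀ _ ha.ne', mul_one] at this
  linarith

theorem sum_mul_log_div_sum_le {ι : Type*} [Fintype ι] {a b : ι → ℝ} (ha : ∀ i, 0 ≤ a i)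
    (hb : ∀ i, 0 ≤ b i) (hab : ∀ i, 0 < a i → 0 < b i) :
    ∑ i, a i * log (b i / ∑ j, b j) ≤ ∑ i, a i * log (a i / ∑ j, a j) := by
  rcases (sum_nonneg fun i _ => ha i).eq_or_lt with hA | hA
  · have ha0 : ∀ i, a i = 0 := fun i =>
      (sum_eq_zero_iff_of_nonneg fun i _ => ha i).1 hA.symm i (mem_univ i)
    simp [ha0]
  obtain ⟨i₀, -, hi₀⟩ :=
    exists_lt_of_sum_lt (by simpa using hA : ∑ _i : ι, (0 : ℝ) < ∑ i, a i)
  have hB : 0 < ∑ j, b j :=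
    (hab i₀ hi₀).trans_le (single_le_sum (fun j _ => hb j) (mem_univ i₀))
  calc ∑ i, a i * log (b i / ∑ j, b j)
      ≤ ∑ i, (a i * log (a i / ∑ j, a j) + ((∑ j, a j) / (∑ j, b j) * b i - a i)) :=
        sum_le_sum fun i _ => mul_log_div_le_mul_log_div_add (ha i) (hb i) (hab i) hA hB
    _ = ∑ i, a i * log (a i / ∑ j, a j) := by
        rw [sum_add_distrib, sum_sub_distrib, ← mul_sum, div_mul_cancel₀ _ hB.ne', sub_self,
          add_zero]

theorem sum_mul_comp_eq_sum_fiber {ι κ R : Type*} [Fintype ι] [Fintype κ] [DecidableEq κ]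
    [NonUnitalNonAssocSemiring R] (w : ι → R) (g : ι → κ) (f : κ → R) :
    ∑ i, w i * f (g i) = ∑ k, (∑ i with g i = k, w i) * f k := by
  rw [← sum_fiberwise univ g]
  refine sum_congr rfl fun k _ => ?_
  rw [sum_mul]
  exact sum_congr rfl fun i hi => by rw [(mem_filter.1 hi).2]

theorem mul_sum_eq_sum_mul_of_eq_weightedMean {ι : Type*} {s : Finset ι} {p r : ι → ℝ}
    (hp : ∀ i ∈ s, 0 ≤ p i) {c : ℝ}
    (hc : 0 < ∑ i ∈ s, p i → c = (∑ i ∈ s, r i * p i) / ∑ i ∈ s, p i) :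
    c * ∑ i ∈ s, p i = ∑ i ∈ s, r i * p i := by
  rcases (sum_nonneg hp).eq_or_lt with h0 | hpos
  · rw [← h0, mul_zero]
    refine (sum_eq_zero fun i hi => ?_).symm
    rw [(sum_eq_zero_iff_of_nonneg hp).1 h0.symm i hi, mul_zero]
  · rw [hc hpos, div_mul_cancel₀ _ hpos.ne']

theorem sum_mul_neg_log_exactGuidance_le {Ω S : Type*} [Fintype Ω] [Fintype S]
    [DecidableEq S] (g : Ω → S) {p r : Ω → ℝ} (hp : ∀ x, 0 ≤ p x) (hr : ∀ x, 0 ≤ r x)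
    {pd h H : S → ℝ}
    (hpd : ∀ s, pd s = ∑ x with g x = s, p x)
    (hh : ∀ s, 0 < pd s → h s = (∑ x with g x = s, r x * p x) / pd s) (hH : ∀ s, 0 < H s) :
    ∑ x, r x * p x * -log (h (g x) * pd (g x) / ∑ s, h s * pd s) ≤
      ∑ x, r x * p x * -log (H (g x) * pd (g x) / ∑ s, H s * pd s) := by
  set W : S → ℝ := fun s => ∑ x with g x = s, r x * p x
  have hW : ∀ s, 0 ≤ W s := fun s => sum_nonneg fun x _ => mul_nonneg (hr x) (hp x)
  have hpd_nonneg : ∀ s, 0 ≤ pd s := fun s => hpd s ▸ sum_nonneg fun x _ => hp x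
  have hmass : ∀ s, h s * pd s = W s := fun s => by
    rw [hpd s]
    exact mul_sum_eq_sum_mul_of_eq_weightedMean (fun x _ => hp x) (hpd s ▸ hh s)
  have hpd_pos : ∀ s, 0 < W s → 0 < pd s := fun s hs =>
    (hpd_nonneg s).lt_of_ne fun h0 => by simp [← hmass, ← h0] at hs
  rw [sum_mul_comp_eq_sum_fiber _ g fun s => -log (h s * pd s / ∑ t, h t * pd t),
    sum_mul_comp_eq_sum_fiber _ g fun s => -log (H s * pd s / ∑ t, H t * pd t)]
  simp only [hmass, mul_neg, sum_neg_distrib, neg_le_neg_iff]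
  exact sum_mul_log_div_sum_le hW (fun s => mul_nonneg (hH s).le (hpd_nonneg s))
    fun s hs => mul_pos (hH s) (hpd_pos s hs)

theorem eq_mul_of_eq_div_sum {ι : Type*} [Fintype ι] {u p : ι → ℝ} (hu : ∀ i, 0 ≤ u i)
    {Z : ℝ} (hZ : Z = ∑ j, u j) {i : ι} (hp : 0 < Z → p i = u i / Z) : u i = Z * p i := by
  rcases (hZ ▸ sum_nonneg fun j _ => hu j : 0 ≤ Z).eq_or_lt with h0 | hpos
  · rw [← h0, zero_mul]
    exact (sum_eq_zero_iff_of_nonneg fun j _ => hu j).1 (h0.trans hZ).symm i (mem_univ i)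
  · rw [hp hpos, mul_div_cancel₀ _ hpos.ne']

theorem ite_div_mul_eq {a b : ℝ} (ha : 0 ≤ a) (hb : 0 ≤ b) (hab : 0 < a → 0 < b) :
    (if 0 < b then a / b else 0) * b = a := by
  split_ifs with h
  · exact div_mul_cancel₀ a h.ne'
  · have hb0 : b = 0 := le_antisymm (not_lt.1 h) hb
    have ha0 : a = 0 := le_antisymm (not_lt.1 fun ha' => h (hab ha')) ha
    rw [hb0, ha0, zero_mul]

theorem exact_guidance_minimizes_regularization_general
    {S : Type*} [Fintype S] [DecidableEq S] {D : ℕ}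
    (p₁ q₁ : (Fin D → S) → ℝ)
    (hp₁nonneg : ∀ x, 0 ≤ p₁ x)
    (hq₁nonneg : ∀ x, 0 ≤ q₁ x)
    (hac : ∀ x, 0 < q₁ x → 0 < p₁ x)
    (r : (Fin D → S) → ℝ)
    (hr : ∀ x, r x = if 0 < p₁ x then q₁ x / p₁ x else 0)
    (k : (Fin D → S) → (Fin D → S) → ℝ)
    (hknonneg : ∀ x x₁, 0 ≤ k x x₁)
    (pt : (Fin D → S) → ℝ)
    (hpt : ∀ x, pt x = ∑ x₁, k x x₁ * p₁ x₁)
    (p1t : (Fin D → S) → (Fin D → S) → ℝ)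
    (hp1t : ∀ x₁ x, 0 < pt x → p1t x₁ x = k x x₁ * p₁ x₁ / pt x)
    (pd : Fin D → S → (Fin D → S) → ℝ)
    (hpd : ∀ d s x, 0 < pt x →
      pd d s x = ∑ x₁ ∈ Finset.univ.filter (fun x₁ => x₁ d = s), p1t x₁ x)
    (hstar : Fin D → S → (Fin D → S) → ℝ)
    (hhstar : ∀ d s x, 0 < pt x → 0 < pd d s x →
      hstar d s x =
        (∑ x₁ ∈ Finset.univ.filter (fun x₁ => x₁ d = s), r x₁ * p1t x₁ x) / pd d s x)
    (H : Fin D → S → (Fin D → S) → ℝ)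
    (hHpos : ∀ d s x, 0 < H d s x) :
    (∑ x₁, ∑ x, q₁ x₁ * k x x₁ *
        ∑ d, -Real.log (H d (x₁ d) x * pd d (x₁ d) x / ∑ s, H d s x * pd d s x)) ≥
      ∑ x₁, ∑ x, q₁ x₁ * k x x₁ *
        ∑ d, -Real.log
          (hstar d (x₁ d) x * pd d (x₁ d) x / ∑ s, hstar d s x * pd d s x) := by
  have hr_nonneg : ∀ x₁, 0 ≤ r x₁ := fun x₁ => by
    rw [hr x₁]
    split_ifs
    exacts [div_nonneg (hq₁nonneg x₁) (hp₁nonneg x₁), le_rfl]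
  have hjoint_nonneg : ∀ x x₁, 0 ≤ k x x₁ * p₁ x₁ := fun x x₁ =>
    mul_nonneg (hknonneg x x₁) (hp₁nonneg x₁)
  have hweight : ∀ x₁ x, q₁ x₁ * k x x₁ = pt x * (r x₁ * p1t x₁ x) := by
    intro x₁ x
    rw [← ite_div_mul_eq (hq₁nonneg x₁) (hp₁nonneg x₁) (hac x₁), ← hr x₁]
    linear_combination
      r x₁ * eq_mul_of_eq_div_sum (p := (p1t · x)) (hjoint_nonneg x) (hpt x) (hp1t x₁ x)
  have hregroup : ∀ g : Fin D → S → (Fin D → S) → ℝ,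
      ∑ x₁, ∑ x, q₁ x₁ * k x x₁ *
          ∑ d, -log (g d (x₁ d) x * pd d (x₁ d) x / ∑ s, g d s x * pd d s x) =
        ∑ x, pt x * ∑ d, ∑ x₁, r x₁ * p1t x₁ x *
          -log (g d (x₁ d) x * pd d (x₁ d) x / ∑ s, g d s x * pd d s x) := by
    intro g
    rw [sum_comm]
    refine sum_congr rfl fun x _ => ?_
    simp only [hweight, mul_sum, mul_assoc]
    exact sum_comm
  rw [ge_iff_le, hregroup, hregroup]
  refine sum_le_sum fun x _ => ?_
  have hpt_nonneg : 0 ≤ pt x := hpt x ▸ sum_nonneg fun x₁ _ => hjoint_nonneg x x₁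
  rcases hpt_nonneg.eq_or_lt with h0 | hpos
  · simp [← h0]
  have hp1t_nonneg : ∀ x₁, 0 ≤ p1t x₁ x := fun x₁ =>
    hp1t x₁ x hpos ▸ div_nonneg (hjoint_nonneg x x₁) hpos.le
  refine mul_le_mul_of_nonneg_left (sum_le_sum fun d _ => ?_) hpos.le
  exact sum_mul_neg_log_exactGuidance_le (fun x₁ => x₁ d) hp1t_nonneg hr_nonneg
    (hpd d · x hpos) (hhstar d · x hpos) (hHpos d · x)

/-- The exact guidance minimizes the cross-entropy regularization objective over
positive guidance functions. -/
theorem exact_guidance_minimizes_regularization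
    {S : Type*} [Fintype S] [Nonempty S] [DecidableEq S] {D : ℕ} (hD : 0 < D)
    (p₁ q₁ : (Fin D → S) → ℝ)
    (hp₁nonneg : ∀ x, 0 ≤ p₁ x) (hp₁sum : ∑ x, p₁ x = 1)
    (hq₁nonneg : ∀ x, 0 ≤ q₁ x) (hq₁sum : ∑ x, q₁ x = 1)
    (hac : ∀ x, 0 < q₁ x → 0 < p₁ x)
    (r : (Fin D → S) → ℝ)
    (hr : ∀ x, r x = if 0 < p₁ x then q₁ x / p₁ x else 0)
    (k : (Fin D → S) → (Fin D → S) → ℝ)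
    (hknonneg : ∀ x x₁, 0 ≤ k x x₁) (hksum : ∀ x₁, ∑ x, k x x₁ = 1)
    (pt : (Fin D → S) → ℝ)
    (hpt : ∀ x, pt x = ∑ x₁, k x x₁ * p₁ x₁)
    (p1t : (Fin D → S) → (Fin D → S) → ℝ)
    (hp1t : ∀ x₁ x, 0 < pt x → p1t x₁ x = k x x₁ * p₁ x₁ / pt x)
    (pd : Fin D → S → (Fin D → S) → ℝ)
    (hpd : ∀ d s x, 0 < pt x →
      pd d s x = ∑ x₁ ∈ Finset.univ.filter (fun x₁ => x₁ d = s), p1t x₁ x)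
    (hstar : Fin D → S → (Fin D → S) → ℝ)
    (hhstar : ∀ d s x, 0 < pt x → 0 < pd d s x →
      hstar d s x =
        (∑ x₁ ∈ Finset.univ.filter (fun x₁ => x₁ d = s), r x₁ * p1t x₁ x) / pd d s x)
    (hhstar' : ∀ d s x, ¬ (0 < pt x ∧ 0 < pd d s x) → hstar d s x = 1)
    (H : Fin D → S → (Fin D → S) → ℝ)
    (hHpos : ∀ d s x, 0 < H d s x) :
    (∑ x₁, ∑ x, q₁ x₁ * k x x₁ *
        ∑ d, -Real.log (H d (x₁ d) x * pd d (x₁ d) x / ∑ s, H d s x * pd d s x)) ≥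
      ∑ x₁, ∑ x, q₁ x₁ * k x x₁ *
        ∑ d, -Real.log
          (hstar d (x₁ d) x * pd d (x₁ d) x / ∑ s, hstar d s x * pd d s x) :=
  exact_guidance_minimizes_regularization_general p₁ q₁ hp₁nonneg hq₁nonneg hac r hr k hknonneg pt
    hpt p1t hp1t pd hpd hstar hhstar H hHpos
end

section
/- (Predictor guidance with unit strength satisfies the Kolmogorov forward equation for the conditional path.) Let Ω be a nonempty finite set and I an open interval of times. Let t ↦ p_t and t ↦ π_t be differentiable families of strictly positive pmfs on Ω (π_t playing the role of p_t(·|y)), let c > 0 (playing the role of p(y)), and define g_t(z) = c · π_t(z)/p_t(z). Suppose Q_t : Ω × Ω → ℝ satisfies, for every z ∈ Ω and t ∈ I: (i) d/dt p_t(z) = −Σ_{x∈Ω} Q_t(z, x) p_t(x); (ii) d/dt π_t(z) = −Σ_{x∈Ω} Q_t(z, x) π_t(x); (iii) Σ_{x∈Ω} Q_t(x, z) = 0. Define the time-reversed rate u_t(z, x) = Q_t(x, z) p_t(z)/p_t(x) for z ≠ x, and the unit-strength predictor-guided rate w_t(z, x) = (g_t(z)/g_t(x)) u_t(z, x) for z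 ≠ x. Then for every z ∈ Ω and t ∈ I: Σ_{x ≠ z} w_t(z, x) π_t(x) − Σ_{x ≠ z} w_t(x, z) π_t(z) = d/dt π_t(z); i.e. w_t generates the probability path π_t. -/
/-!
The guidance factor `g_t = c π_t / p_t` converts the time reversal of `Q_t` with respect to `p_t`
into its time reversal with respect to `π_t`: `w_t(z, x) = Q_t(x, z) π_t(z) / π_t(x)`. The net
probability flow of such a reversed rate into `z` is `π_t(z) ∑ₓ Q_t(x, z) - ∑ₓ Q_t(z, x) π_t(x)`,
and the first term vanishes because the columns of `Q_t` sum to zero, leaving exactly the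
forward equation that `π_t` satisfies.
-/

open Finset

section TimeReversal

variable {Ω : Type*}

noncomputable def timeReversal (Q : Ω → Ω → ℝ) (π : Ω → ℝ) (z x : Ω) : ℝ :=
  Q x z * π z / π x

lemma timeReversal_mul_apply (Q : Ω → Ω → ℝ) {π : Ω → ℝ} (z : Ω) {x : Ω} (hx : π x ≠ 0) :
    timeReversal Q π z x * π x = Q x z * π z := by
  rw [timeReversal, div_mul_cancel₀ _ hx]

lemma guidance_mul_timeReversal (Q : Ω → Ω → ℝ) {p π : Ω → ℝ} {c : ℝ} {z x : Ω} (hc : c ≠ 0)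
    (hpz : p z ≠ 0) (hpx : p x ≠ 0) (hπx : π x ≠ 0) :
    c * π z / p z / (c * π x / p x) * timeReversal Q p z x = timeReversal Q π z x := by
  unfold timeReversal
  field_simp

lemma timeReversal_netFlow [Fintype Ω] [DecidableEq Ω] (Q : Ω → Ω → ℝ) {π : Ω → ℝ}
    (hπ : ∀ x, π x ≠ 0) (z : Ω) (hQ : ∑ x, Q x z = 0) :
    ∑ x ∈ univ.filter (fun x => x ≠ z), timeReversal Q π z x * π x -
        ∑ x ∈ univ.filter (fun x => x ≠ z), timeReversal Q π x z * π z =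
      -∑ x, Q z x * π x := by
  simp only [timeReversal_mul_apply Q _ (hπ _), filter_ne', sum_erase_eq_sub (mem_univ z),
    ← sum_mul, hQ]
  ring

end TimeReversal

theorem unit_strength_predictor_guidance_generates_general
    {Ω : Type*} [Fintype Ω] [DecidableEq Ω]
    (a b : ℝ)
    (pt prt : ℝ → Ω → ℝ)
    (hptpos : ∀ t ∈ Set.Ioo a b, ∀ z, 0 < pt t z)
    (hprtpos : ∀ t ∈ Set.Ioo a b, ∀ z, 0 < prt t z)
    (c : ℝ) (hc : 0 < c)
    (g : ℝ → Ω → ℝ) (hg : ∀ t z, g t z = c * prt t z / pt t z)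
    (Q : ℝ → Ω → Ω → ℝ)
    (hKFEpr : ∀ t ∈ Set.Ioo a b, ∀ z,
      HasDerivAt (fun s => prt s z) (-∑ x, Q t z x * prt t x) t)
    (hcons : ∀ t ∈ Set.Ioo a b, ∀ z, ∑ x, Q t x z = 0)
    (u : ℝ → Ω → Ω → ℝ)
    (hu : ∀ t z x, z ≠ x → u t z x = Q t x z * pt t z / pt t x)
    (w : ℝ → Ω → Ω → ℝ)
    (hw : ∀ t z x, z ≠ x → w t z x = g t z / g t x * u t z x) :
    ∀ t ∈ Set.Ioo a b, ∀ z,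
      HasDerivAt (fun s => prt s z)
        ((∑ x ∈ Finset.univ.filter (fun x => x ≠ z), w t z x * prt t x) -
          ∑ x ∈ Finset.univ.filter (fun x => x ≠ z), w t x z * prt t z) t := by
  intro t ht z
  have hp : ∀ x, pt t x ≠ 0 := fun x => (hptpos t ht x).ne'
  have hπ : ∀ x, prt t x ≠ 0 := fun x => (hprtpos t ht x).ne'
  have hw_eq : ∀ z x, z ≠ x → w t z x = timeReversal (Q t) (prt t) z x := fun z x hzx => by
    rw [hw t z x hzx, hu t z x hzx, hg, hg]
    exact guidance_mul_timeReversal (Q t) hc.ne' (hp z) (hp x) (hπ x)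
  have hflow := timeReversal_netFlow (Q t) hπ z (hcons t ht z)
  convert hKFEpr t ht z using 2
  refine (congrArg₂ _ (sum_congr rfl fun x hx => ?_) (sum_congr rfl fun x hx => ?_)).trans hflow
  · rw [hw_eq z x (mem_filter.1 hx).2.symm]
  · rw [hw_eq x z (mem_filter.1 hx).2]

/-- Predictor guidance with unit strength satisfies the Kolmogorov forward equation for
the conditional path: the unit-strength predictor-guided rate `w_t` generates `π_t`. -/
theorem unit_strength_predictor_guidance_generates
    {Ω : Type*} [Fintype Ω] [Nonempty Ω] [DecidableEq Ω]
    (a b : ℝ)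
    (pt prt : ℝ → Ω → ℝ)
    (hptpos : ∀ t ∈ Set.Ioo a b, ∀ z, 0 < pt t z)
    (hptsum : ∀ t ∈ Set.Ioo a b, ∑ z, pt t z = 1)
    (hprtpos : ∀ t ∈ Set.Ioo a b, ∀ z, 0 < prt t z)
    (hprtsum : ∀ t ∈ Set.Ioo a b, ∑ z, prt t z = 1)
    (c : ℝ) (hc : 0 < c)
    (g : ℝ → Ω → ℝ) (hg : ∀ t z, g t z = c * prt t z / pt t z)
    (Q : ℝ → Ω → Ω → ℝ)
    (hKFEp : ∀ t ∈ Set.Ioo a b, ∀ z,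
      HasDerivAt (fun s => pt s z) (-∑ x, Q t z x * pt t x) t)
    (hKFEpr : ∀ t ∈ Set.Ioo a b, ∀ z,
      HasDerivAt (fun s => prt s z) (-∑ x, Q t z x * prt t x) t)
    (hcons : ∀ t ∈ Set.Ioo a b, ∀ z, ∑ x, Q t x z = 0)
    (u : ℝ → Ω → Ω → ℝ)
    (hu : ∀ t z x, z ≠ x → u t z x = Q t x z * pt t z / pt t x)
    (w : ℝ → Ω → Ω → ℝ)
    (hw : ∀ t z x, z ≠ x → w t z x = g t z / g t x * u t z x) :
    ∀ t ∈ Set.Ioo a b, ∀ z,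
      HasDerivAt (fun s => prt s z)
        ((∑ x ∈ Finset.univ.filter (fun x => x ≠ z), w t z x * prt t x) -
          ∑ x ∈ Finset.univ.filter (fun x => x ≠ z), w t x z * prt t z) t :=
  unit_strength_predictor_guidance_generates_general a b pt prt hptpos hprtpos c hc g hg Q hKFEpr
    hcons u hu w hw
end
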